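/- arXiv:2106.10308 — 5 statements merged into one kernel-verified Lean document; each statement's English description precedes it below -/
import Mathlib

section
/- Let n ≥ 4 be an integer and f ∈ ℚ[X] an irreducible polynomial of degree n; let L be a splitting field of f over ℚ and α ∈ L a root of f. If the image of the Galois group Gal(L/ℚ) in the permutation group of the set of roots of f in L is either the full symmetric group of the root set or its alternating group, then the extension ℚ(α)/ℚ has no proper intermediate subfields except ℚ (every intermediate field of ℚ(α)/ℚ equals ℚ or ℚ(α)). -/
/-- The natural action of the Galois group `Gal(L/ℚ) = (L ≃ₐ[ℚ] L)` on the set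
of roots of a polynomial `f ∈ ℚ[X]` in `L`. -/
noncomputable instance galRootAction (f : Polynomial ℚ) (L : Type) [Field L] [Algebra ℚ L] :
    MulAction (L ≃ₐ[ℚ] L) (f.rootSet L) where
  smul σ x := ⟨σ x.1, by
    have hx := x.2
    rw [Polynomial.mem_rootSet] at hx ⊢
    refine ⟨hx.1, ?_⟩
    have h : Polynomial.aeval (σ x.1) f = σ (Polynomial.aeval x.1 f) :=
      Polynomial.aeval_algHom_apply (σ : L →ₐ[ℚ] L) x.1 f
    rw [h, hx.2, map_zero]⟩
  one_smul x := Subtype.ext rfl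
  mul_smul σ τ x := Subtype.ext rfl

/-!
The alternating group on at least three letters acts primitively, so a Galois group whose image
contains it acts primitively on the roots of `f`, and the stabilizer of the root `α` is a maximal
subgroup. That stabilizer is the fixing subgroup of `ℚ(α)`, so by the Galois correspondence
`ℚ(α)` is an atom in the lattice of intermediate fields.
-/

open MulAction

theorem MulAction.IsPreprimitive.of_le_range {G X : Type*} [Group G] [MulAction G X]
    (H : Subgroup (Equiv.Perm X)) [IsPreprimitive H X] (hH : H ≤ (toPermHom G X).range) :
    IsPreprimitive G X := by
  choose φ hφ using fun h : H => hH h.2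
  let f : X →ₑ[φ] X :=
    { toFun := id
      map_smul' := fun h x => by
        change (h : Equiv.Perm X) x = φ h • x
        rw [← hφ h]
        rfl }
  exact IsPreprimitive.of_surjective (f := f) Function.surjective_id

namespace IntermediateField

variable {F E : Type*} [Field F] [Field E] [Algebra F E]

theorem fixingSubgroup_adjoin_simple (α : E) :
    F⟮α⟯.fixingSubgroup = stabilizer Gal(E/F) α := by
  refine le_antisymm
    (fun σ hσ => (mem_fixingSubgroup_iff _ _).1 hσ α (mem_adjoin_simple_self F α)) ?_
  rw [← le_iff_le, adjoin_simple_le_iff, mem_fixedField_iff]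
  exact fun σ hσ => hσ

theorem isAtom_adjoin_simple_of_isCoatom_stabilizer [FiniteDimensional F E] [IsGalois F E] {α : E}
    (h : IsCoatom (stabilizer Gal(E/F) α)) : IsAtom F⟮α⟯ := by
  rw [← fixingSubgroup_adjoin_simple, ← isAtom_dual_iff_isCoatom] at h
  exact (IsGalois.intermediateFieldEquivSubgroup.isAtom_iff _).1 h

end IntermediateField

theorem stabilizer_rootSet_eq_stabilizer_val (f : Polynomial ℚ) (L : Type) [Field L]
    [Algebra ℚ L] (x : f.rootSet L) :
    stabilizer (L ≃ₐ[ℚ] L) x = stabilizer (L ≃ₐ[ℚ] L) (x : L) := by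
  ext σ
  exact Subtype.ext_iff

/-- Let `n ≥ 4` and `f ∈ ℚ[X]` irreducible of degree `n`, `L` a
splitting field of `f` over `ℚ`, `α ∈ L` a root of `f`. If the image of
`Gal(L/ℚ)` in the permutation group of the set of roots of `f` in `L` is the
full symmetric group or the alternating group, then `ℚ(α)/ℚ` has no proper
intermediate subfields except `ℚ`. -/
theorem no_intermediate_subfields_of_symmetric_or_alternating
    (f : Polynomial ℚ) (hf : Irreducible f) (hdeg : 4 ≤ f.natDegree)
    (L : Type) [Field L] [Algebra ℚ L] [DecidableEq L]
    [Polynomial.IsSplittingField ℚ L f]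
    (α : L) (hα : Polynomial.aeval α f = 0)
    (hgal : (MulAction.toPermHom (L ≃ₐ[ℚ] L) (f.rootSet L)).range = ⊤ ∨
      (MulAction.toPermHom (L ≃ₐ[ℚ] L) (f.rootSet L)).range =
        alternatingGroup (f.rootSet L)) :
    ∀ K : IntermediateField ℚ L, K ≤ IntermediateField.adjoin ℚ {α} →
      K = ⊥ ∨ K = IntermediateField.adjoin ℚ {α} := by
  intro K hK
  have : FiniteDimensional ℚ L := Polynomial.IsSplittingField.finiteDimensional L f
  have : IsGalois ℚ L := IsGalois.of_separable_splitting_field hf.separable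
  have hcard : 4 ≤ Nat.card (f.rootSet L) := by
    rw [Nat.card_eq_fintype_card, Polynomial.card_rootSet_eq_natDegree hf.separable
      (Polynomial.IsSplittingField.splits L f)]
    exact hdeg
  have : Nontrivial (f.rootSet L) := Finite.one_lt_card_iff_nontrivial.1 (by omega)
  have := alternatingGroup.isPreprimitive_of_three_le_card (f.rootSet L) (by omega)
  have hA :
      alternatingGroup (f.rootSet L) ≤ (toPermHom (L ≃ₐ[ℚ] L) (f.rootSet L)).range := by
    rcases hgal with h | h <;> simp [h]
  have := IsPreprimitive.of_le_range _ hA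
  have hcoatom := IsPreprimitive.isCoatom_stabilizer_of_isPreprimitive (L ≃ₐ[ℚ] L)
    (⟨α, Polynomial.mem_rootSet.2 ⟨hf.ne_zero, hα⟩⟩ : f.rootSet L)
  rw [stabilizer_rootSet_eq_stabilizer_val] at hcoatom
  exact (IntermediateField.isAtom_adjoin_simple_of_isCoatom_stabilizer hcoatom).le_iff.1 hK
end

section
/- Let (l, p, b, c) be a g-admissible quadruple for an integer g ≥ 2. Then the polynomial f_g(x) = x^{2g} − b·x − (p·c)/l^l is irreducible in ℚ[x]. -/
/-! For the `l`-adic valuation, the Newton polygon of `X^(2g) - bX - pc/l^l` is the single segment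
from `(0, -l)` to `(2g, 0)`, and its slope `l / 2g` is in lowest terms because `l ∣ 2g - 1`.
In terms of the Gauss norm `‖∑ aᵢ Xⁱ‖ = maxᵢ |aᵢ|_l rⁱ` with `r^(2g) = l^l`, which is
multiplicative: the polynomial has norm `r^(2g) = |f(0)|_l`, while a monic factor `U` of degree `d`
has norm at least `r^d`. Comparing the two factors forces `|U(0)|_l = r^d`, i.e.
`2g · v_l(U(0)) = -l d`, so `2g ∣ d`. -/

open Polynomial Rat.AbsoluteValue

namespace Rat.AbsoluteValue

lemma isNonarchimedean_padic (l : ℕ) [Fact l.Prime] : IsNonarchimedean (padic l) := fun q r => by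
  simpa using padicNorm.nonarchimedean (p := l) (q := q) (r := r)

lemma padic_eq_zpow_neg_padicValRat {l : ℕ} [Fact l.Prime] {q : ℚ} (hq : q ≠ 0) :
    padic l q = (l : ℝ) ^ (-padicValRat l q) := by
  simp [padicNorm.eq_zpow_of_nonzero hq]

end Rat.AbsoluteValue

namespace Polynomial

section GaussNorm

lemma gaussNorm_le_of_forall {R F : Type*} [Semiring R] [FunLike F R ℝ] [ZeroHomClass F R ℝ]
    {v : F} {c B : ℝ} {p : R[X]} (h : ∀ i, v (p.coeff i) * c ^ i ≤ B) : p.gaussNorm v c ≤ B := by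
  obtain ⟨i, hi⟩ := p.exists_eq_gaussNorm v c
  exact hi ▸ h i

variable {R : Type*} [Ring R] [Nontrivial R] {v : AbsoluteValue R ℝ} {c : ℝ}

lemma Monic.pow_natDegree_le_gaussNorm {p : R[X]} (hp : p.Monic) (hc : 0 ≤ c) :
    c ^ p.natDegree ≤ p.gaussNorm v c := by
  simpa [hp.coeff_natDegree] using p.le_gaussNorm v hc p.natDegree

theorem Monic.apply_coeff_zero_eq_pow_natDegree {U V : R[X]} (hU : U.Monic) (hV : V.Monic)
    (hna : IsNonarchimedean v) (hc : 0 < c)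
    (hnorm : (U * V).gaussNorm v c ≤ c ^ (U * V).natDegree)
    (hconst : c ^ (U * V).natDegree ≤ v ((U * V).coeff 0)) :
    v (U.coeff 0) = c ^ U.natDegree := by
  have hUd := hU.pow_natDegree_le_gaussNorm (v := v) hc.le
  have hVd := hV.pow_natDegree_le_gaussNorm (v := v) hc.le
  have hU0 : v (U.coeff 0) ≤ U.gaussNorm v c := by simpa using U.le_gaussNorm v hc.le 0
  have hV0 : v (V.coeff 0) ≤ V.gaussNorm v c := by simpa using V.le_gaussNorm v hc.le 0
  rw [gaussNorm_mul hna hc, hU.natDegree_mul hV, pow_add] at hnorm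
  rw [hU.natDegree_mul hV, pow_add, mul_coeff_zero, map_mul] at hconst
  have := v.nonneg (U.coeff 0)
  have := v.nonneg (V.coeff 0)
  have hcd : 0 < c ^ U.natDegree := pow_pos hc _
  have hce : 0 < c ^ V.natDegree := pow_pos hc _
  -- `v U₀ · v V₀ ≤ ‖U‖ ‖V‖ ≤ cᵈ cᵉ ≤ v U₀ · v V₀` with `cᵈ ≤ ‖U‖`, `cᵉ ≤ ‖V‖`: all are equalities.
  nlinarith

end GaussNorm

/-- Dumas' criterion: the `l`-adic Newton polygon of `f` is one segment from `(0, -m)` to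
`(deg f, 0)` with `gcd(m, deg f) = 1`. -/
theorem Monic.irreducible_of_padicValRat_coeff {l : ℕ} [Fact l.Prime] {f : ℚ[X]}
    (hf : f.Monic) {m : ℤ} (hm : IsCoprime m f.natDegree) (hf0 : f.coeff 0 ≠ 0)
    (hv0 : padicValRat l (f.coeff 0) = -m)
    (hv : ∀ i, f.coeff i ≠ 0 → m * (i - f.natDegree) ≤ f.natDegree * padicValRat l (f.coeff i)) :
    Irreducible f := by
  set n := f.natDegree
  have hl1 : (1 : ℝ) < l := by exact_mod_cast (Fact.out : l.Prime).one_lt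
  have hn : n ≠ 0 := by
    rintro hn
    rw [hn, Nat.cast_zero, isCoprime_zero_right, Int.isUnit_iff] at hm
    rw [hf.natDegree_eq_zero.mp hn, coeff_one_zero, padicValRat.one] at hv0
    omega
  obtain ⟨c, hc, hcn⟩ : ∃ c : ℝ, 0 < c ∧ c ^ n = (l : ℝ) ^ m :=
    ⟨((l : ℝ) ^ m) ^ (n⁻¹ : ℝ), by positivity, Real.rpow_inv_natCast_pow (by positivity) hn⟩
  have hcpow (i : ℕ) : (c ^ i) ^ n = (l : ℝ) ^ (m * i) := by
    rw [← pow_mul, mul_comm, pow_mul, hcn, zpow_mul, zpow_natCast]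
  have hqpow {q : ℚ} (hq : q ≠ 0) : padic l q ^ n = (l : ℝ) ^ (-(n * padicValRat l q)) := by
    rw [padic_eq_zpow_neg_padicValRat hq, ← zpow_natCast, ← zpow_mul]
    ring_nf
  have hnorm : f.gaussNorm (padic l) c ≤ c ^ n := gaussNorm_le_of_forall fun i => by
    by_cases hi : f.coeff i = 0
    · simp [hi]; positivity
    rw [← pow_le_pow_iff_left₀ (by positivity) (by positivity) hn, mul_pow, hqpow hi, hcpow i,
      hcpow n, ← zpow_add₀ (by positivity), zpow_le_zpow_iff_right₀ hl1]
    linarith [hv i hi]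
  have hconst : c ^ n ≤ padic l (f.coeff 0) := by
    rw [padic_eq_zpow_neg_padicValRat hf0, hv0, neg_neg, hcn]
  rw [hf.irreducible_iff_natDegree]
  refine ⟨fun h => by simp [h, n] at hn, fun U V hU hV hUV => ?_⟩
  subst hUV
  have hU0 := hU.apply_coeff_zero_eq_pow_natDegree hV (isNonarchimedean_padic l) hc hnorm hconst
  have hU0' : U.coeff 0 ≠ 0 := fun h => by
    rw [h, map_zero] at hU0
    exact (pow_pos hc _).ne hU0
  have hval : -(n * padicValRat l (U.coeff 0)) = m * U.natDegree := by
    apply zpow_right_injective₀ (by positivity : (0 : ℝ) < l) hl1.ne'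
    simp only [← hqpow hU0', hU0, hcpow]
  have hdvd : (n : ℤ) ∣ U.natDegree :=
    hm.symm.dvd_of_dvd_mul_left ⟨-padicValRat l (U.coeff 0), by linarith [hval]⟩
  have hdeg : U.natDegree + V.natDegree = n := (hU.natDegree_mul hV).symm
  rcases Nat.eq_zero_or_pos V.natDegree with hV0 | hV0
  · exact .inr hV0
  · exact .inl (Nat.eq_zero_of_dvd_of_lt (Int.natCast_dvd_natCast.mp hdvd) (by omega))

theorem irreducible_X_pow_sub_C_mul_X_sub_C {l : ℕ} [Fact l.Prime] {n : ℕ} (hn : 2 ≤ n)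
    (b : ℤ) {a : ℚ} (ha : a ≠ 0) {m : ℕ} (hm : m.Coprime n) (hva : padicValRat l a = -m) :
    Irreducible (X ^ n - C (b : ℚ) * X - C a) := by
  have hlow : (C (b : ℚ) * X + C a).natDegree < (X ^ n : ℚ[X]).natDegree := by
    rw [natDegree_X_pow]; exact natDegree_linear_le.trans_lt hn
  have hdeg : (X ^ n - C (b : ℚ) * X - C a).natDegree = n := by
    rw [sub_sub, natDegree_sub_eq_left_of_natDegree_lt hlow, natDegree_X_pow]
  have hcoeff (i : ℕ) : (X ^ n - C (b : ℚ) * X - C a).coeff i =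
      (if i = n then 1 else 0) - (if i = 1 then (b : ℚ) else 0) - (if i = 0 then a else 0) := by
    simp [coeff_X_pow, coeff_X, coeff_C, @eq_comm _ 1 i]
  have hn0 : n ≠ 0 := by omega
  have hf : (X ^ n - C (b : ℚ) * X - C a).Monic := by
    rw [sub_sub]; exact (monic_X_pow n).sub_of_left (degree_lt_degree hlow)
  refine hf.irreducible_of_padicValRat_coeff (l := l) (m := m) (by rw [hdeg]; exact hm.isCoprime)
    ?_ ?_ ?_
  · rw [hcoeff]; simpa [hn0.symm] using ha
  · rw [hcoeff]; simpa [hn0.symm] using hva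
  · intro i hi
    rw [hdeg, hcoeff]
    rw [hcoeff] at hi
    by_cases h0 : i = 0
    · subst h0
      simp [hn0.symm, hva, mul_comm]
    by_cases h1 : i = 1
    · subst h1
      simp only [Nat.cast_one, show 1 ≠ n by omega, ↓reduceIte, zero_sub, one_ne_zero, sub_zero,
        padicValRat.neg, padicValRat.of_int]
      calc (m : ℤ) * (1 - n) ≤ 0 := mul_nonpos_of_nonneg_of_nonpos (by positivity) (by omega)
        _ ≤ _ := by positivity
    by_cases hin : i = n
    · subst hin
      simp [h0, h1]
    · simp [h0, h1, hin] at hi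

end Polynomial

theorem mori_polynomial_irreducible_general (g : ℕ) (hg : 2 ≤ g)
    (l p : ℕ) (hl : l.Prime)
    (hldvd : l ∣ 2 * g - 1) (hpmod : p ≡ 1 [MOD 2 * g - 1])
    (b c : ℤ)
    (hcl : ¬ (l : ℤ) ∣ c) :
    Irreducible (Polynomial.X ^ (2 * g) - Polynomial.C (b : ℚ) * Polynomial.X
      - Polynomial.C (((p : ℚ) * (c : ℚ)) / (l : ℚ) ^ l)) := by
  have : Fact l.Prime := ⟨hl⟩
  have hlp : ¬ l ∣ p := fun h => hl.not_dvd_one ((hpmod.dvd_iff hldvd).mp h)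
  have hcop : l.Coprime (2 * g) :=
    ((Nat.coprime_self_sub_left (by omega)).mpr (Nat.coprime_one_left _)).coprime_dvd_left hldvd
  have hp0 : (p : ℚ) ≠ 0 := Nat.cast_ne_zero.mpr fun h => hlp (h ▸ dvd_zero l)
  have hc0 : (c : ℚ) ≠ 0 := Int.cast_ne_zero.mpr fun h => hcl (h ▸ dvd_zero _)
  have hl0 : (l : ℚ) ^ l ≠ 0 := pow_ne_zero _ (by exact_mod_cast hl.ne_zero)
  have hva : padicValRat l ((p : ℚ) * c / (l : ℚ) ^ l) = -l := by
    rw [padicValRat.div (mul_ne_zero hp0 hc0) hl0, padicValRat.mul hp0 hc0, padicValRat.pow,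
      padicValRat.self hl.one_lt, padicValRat.of_nat, padicValRat.of_int,
      padicValNat.eq_zero_of_not_dvd hlp, padicValInt.eq_zero_of_not_dvd hcl]
    ring
  exact irreducible_X_pow_sub_C_mul_X_sub_C (by omega) b (div_ne_zero (mul_ne_zero hp0 hc0) hl0)
    hcop hva

/-- For a `g`-admissible quadruple `(l, p, b, c)` (with `g ≥ 2`),
the polynomial `f_g(x) = x^(2g) - b·x - (p·c)/l^l` is irreducible in `ℚ[x]`. -/
theorem mori_polynomial_irreducible (g : ℕ) (hg : 2 ≤ g)
    (l p : ℕ) (hl : l.Prime) (hp : p.Prime)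
    (hldvd : l ∣ 2 * g - 1) (hpmod : p ≡ 1 [MOD 2 * g - 1])
    (b c : ℤ) (hbl : ¬ (l : ℤ) ∣ b)
    (hbord : orderOf ((b : ZMod p)) = p - 1)
    (hcl : ¬ (l : ℤ) ∣ c) :
    Irreducible (Polynomial.X ^ (2 * g) - Polynomial.C (b : ℚ) * Polynomial.X
      - Polynomial.C (((p : ℚ) * (c : ℚ)) / (l : ℚ) ^ l)) :=
  mori_polynomial_irreducible_general g hg l p hl hldvd hpmod b c hcl
end

section
/- Let X be a finite set with n = |X| ≥ 3 elements and let G be a subgroup of the group of permutations of X such that G acts transitively on X. Suppose G contains a permutation σ that is a cycle whose support has exactly n − 1 elements. Then the action of G on X is 2-transitive (2-pretransitive): any ordered pair of distinct elements of X can be mapped to any other ordered pair of distinct elements by an element of G. -/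
/-!
The cycle `σ` fixes exactly one point `a`, and its powers act transitively on the remaining
points while fixing `a`; so the stabiliser of `a` in `G` is transitive on the complement of `a`.
Together with the transitivity of `G`, this gives 2-transitivity: move `x₁` and `y₁` to `a`,
then match the images of `x₂` and `y₂` by an element of the stabiliser.
-/

namespace Equiv.Perm

variable {α : Type*} [Fintype α] [DecidableEq α]

theorem exists_mem_support_iff_ne_of_card_support_eq_card_sub_one [Nonempty α]
    {σ : Perm α} (h : σ.support.card = Fintype.card α - 1) :
    ∃ a, ∀ x, x ∈ σ.support ↔ x ≠ a := by
  have hcompl : σ.supportᶜ.card = 1 := by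
    have := Fintype.card_pos (α := α)
    rw [Finset.card_compl]
    omega
  obtain ⟨a, ha⟩ := Finset.card_eq_one.mp hcompl
  refine ⟨a, fun x => ?_⟩
  rw [← not_iff_not, ← Finset.mem_compl, ha, Finset.mem_singleton, not_not]

theorem IsCycle.exists_mem_apply_eq_of_apply_eq_self {G : Subgroup (Perm α)} {σ : Perm α}
    (hσG : σ ∈ G) (hσ : σ.IsCycle) {a : α} (ha : σ a = a) {b c : α}
    (hb : b ∈ σ.support) (hc : c ∈ σ.support) :
    ∃ g ∈ G, g a = a ∧ g b = c := by
  obtain ⟨i, hi⟩ := hσ.sameCycle (mem_support.mp hb) (mem_support.mp hc)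
  exact ⟨σ ^ i, G.zpow_mem hσG i, zpow_apply_eq_self_of_apply_eq_self ha i, hi⟩

end Equiv.Perm

theorem Subgroup.exists_mem_apply_eq_apply_eq_of_transitive_of_stabilizer {α : Type*}
    {G : Subgroup (Equiv.Perm α)} (htrans : ∀ x y : α, ∃ g ∈ G, g x = y) (a : α)
    (hstab : ∀ b c : α, b ≠ a → c ≠ a → ∃ g ∈ G, g a = a ∧ g b = c)
    {x₁ x₂ y₁ y₂ : α} (hx : x₁ ≠ x₂) (hy : y₁ ≠ y₂) :
    ∃ g ∈ G, g x₁ = y₁ ∧ g x₂ = y₂ := by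
  obtain ⟨g, hg, hgx⟩ := htrans x₁ a
  obtain ⟨h, hh, hhy⟩ := htrans y₁ a
  have hgx₂ : g x₂ ≠ a := hgx ▸ g.injective.ne hx.symm
  have hhy₂ : h y₂ ≠ a := hhy ▸ h.injective.ne hy.symm
  obtain ⟨k, hk, hka, hkb⟩ := hstab (g x₂) (h y₂) hgx₂ hhy₂
  refine ⟨h⁻¹ * k * g, mul_mem (mul_mem (inv_mem hh) hk) hg, ?_, ?_⟩
  · simp only [Equiv.Perm.mul_apply, hgx, hka]
    rw [← hhy, Equiv.Perm.inv_def, Equiv.symm_apply_apply]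
  · simp only [Equiv.Perm.mul_apply, hkb, Equiv.Perm.inv_def, Equiv.symm_apply_apply]

theorem two_transitive_of_cycle_support_card_sub_one_general
    (X : Type) [Fintype X] [DecidableEq X]
    (G : Subgroup (Equiv.Perm X))
    (htrans : ∀ x y : X, ∃ g ∈ G, g x = y)
    (σ : Equiv.Perm X) (hσG : σ ∈ G) (hcyc : σ.IsCycle)
    (hsupp : σ.support.card = Fintype.card X - 1) :
    ∀ x₁ x₂ y₁ y₂ : X, x₁ ≠ x₂ → y₁ ≠ y₂ →
      ∃ g ∈ G, g x₁ = y₁ ∧ g x₂ = y₂ := by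
  intro x₁ x₂ y₁ y₂ hx hy
  have : Nonempty X := ⟨x₁⟩
  obtain ⟨a, ha⟩ := Equiv.Perm.exists_mem_support_iff_ne_of_card_support_eq_card_sub_one hsupp
  have hσa : σ a = a := Equiv.Perm.notMem_support.mp fun h => (ha a).mp h rfl
  exact G.exists_mem_apply_eq_apply_eq_of_transitive_of_stabilizer htrans a
    (fun b c hb hc => hcyc.exists_mem_apply_eq_of_apply_eq_self hσG hσa
      ((ha b).mpr hb) ((ha c).mpr hc)) hx hy

/-- Let `X` be a finite set with `n = |X| ≥ 3` elements and `G` a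
transitive subgroup of the permutation group of `X`. If `G` contains a cycle
whose support has exactly `n - 1` elements, then the action of `G` on `X` is
2-transitive. -/
theorem two_transitive_of_cycle_support_card_sub_one
    (X : Type) [Fintype X] [DecidableEq X] (hn : 3 ≤ Fintype.card X)
    (G : Subgroup (Equiv.Perm X))
    (htrans : ∀ x y : X, ∃ g ∈ G, g x = y)
    (σ : Equiv.Perm X) (hσG : σ ∈ G) (hcyc : σ.IsCycle)
    (hsupp : σ.support.card = Fintype.card X - 1) :
    ∀ x₁ x₂ y₁ y₂ : X, x₁ ≠ x₂ → y₁ ≠ y₂ →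
      ∃ g ∈ G, g x₁ = y₁ ∧ g x₂ = y₂ :=
  two_transitive_of_cycle_support_card_sub_one_general X G htrans σ hσG hcyc hsupp
end

section
/- Let E be a number field with [E : ℚ] > 2 such that every intermediate field of the extension E/ℚ equals ℚ or E. Then the only roots of unity in E are 1 and −1; that is, if ζ ∈ E satisfies ζ^n = 1 for some integer n ≥ 1, then ζ = 1 or ζ = −1. -/
/-!
If `ζ` is rational it is `±1`. Otherwise `E = ℚ(ζ)` is the cyclotomic field of order
`m = orderOf ζ`, Galois over `ℚ` of degree `φ(m) > 2`, hence `m > 2` and the degree is even.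
By Cauchy's theorem the Galois group then has an element of order `2`, whose fixed field has
codegree `2` and therefore lies strictly between `ℚ` and `E`.
-/

open IntermediateField Module

theorem IsGalois.finrank_eq_of_prime_dvd_of_forall_eq_bot_or_eq_top {K L : Type*} [Field K]
    [Field L] [Algebra K L] [FiniteDimensional K L] [IsGalois K L]
    (h : ∀ F : IntermediateField K L, F = ⊥ ∨ F = ⊤) {p : ℕ} (hp : p.Prime)
    (hdvd : p ∣ finrank K L) : finrank K L = p := by
  have : Fact p.Prime := ⟨hp⟩
  rw [← IsGalois.card_aut_eq_finrank] at hdvd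
  obtain ⟨σ, hσ⟩ := exists_prime_orderOf_dvd_card' p hdvd
  have hcodeg : finrank (fixedField (Subgroup.zpowers σ)) L = p := by
    rw [finrank_fixedField_eq_card, Nat.card_zpowers, hσ]
  rcases h (fixedField (Subgroup.zpowers σ)) with hbot | htop
  · rwa [hbot, finrank_bot'] at hcodeg
  · rw [htop, IntermediateField.finrank_top] at hcodeg
    exact absurd hcodeg.symm hp.one_lt.ne'

theorem IntermediateField.eq_one_or_eq_neg_one_of_mem_bot_of_pow_eq_one {K L : Type*} [Field K]
    [LinearOrder K] [IsStrictOrderedRing K] [Field L] [Algebra K L] {ζ : L}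
    (hζ : ζ ∈ (⊥ : IntermediateField K L)) {n : ℕ} (hn : n ≠ 0) (h : ζ ^ n = 1) :
    ζ = 1 ∨ ζ = -1 := by
  obtain ⟨q, rfl⟩ := mem_bot.1 hζ
  have hq : q ^ n = 1 := (algebraMap K L).injective (by rw [map_pow, h, map_one])
  rcases (pow_eq_one_iff_of_ne_zero hn).1 hq with rfl | ⟨rfl, -⟩
  · exact .inl (map_one _)
  · exact .inr (by rw [map_neg, map_one])

theorem IsPrimitiveRoot.isCyclotomicExtension_of_adjoin_eq_top {K L : Type*} [Field K] [Field L]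
    [Algebra K L] {n : ℕ} [NeZero n] {ζ : L} (hζ : IsPrimitiveRoot ζ n) (h : K⟮ζ⟯ = ⊤) :
    IsCyclotomicExtension {n} K L := by
  have := (isCyclotomicExtension_singleton_iff_eq_adjoin n K L ⊤ hζ).2 h.symm
  exact IsCyclotomicExtension.equiv {n} K _ topEquiv

/-- Let `E` be a number field with `[E : ℚ] > 2` having no proper
subfields except `ℚ`. Then the only roots of unity in `E` are `1` and `-1`. -/
theorem roots_of_unity_of_no_proper_subfield
    (E : Type) [Field E] [NumberField E]
    (hdeg : 2 < Module.finrank ℚ E)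
    (hsub : ∀ K : IntermediateField ℚ E, K = ⊥ ∨ K = ⊤)
    (ζ : E) (n : ℕ) (hn : 1 ≤ n) (hζ : ζ ^ n = 1) :
    ζ = 1 ∨ ζ = -1 := by
  rcases hsub ℚ⟮ζ⟯ with hbot | htop
  · have hmem : ζ ∈ (⊥ : IntermediateField ℚ E) := hbot ▸ mem_adjoin_simple_self ℚ ζ
    exact eq_one_or_eq_neg_one_of_mem_bot_of_pow_eq_one hmem (by omega) hζ
  · exfalso
    set m := orderOf ζ
    have : NeZero m := ⟨(isOfFinOrder_iff_pow_eq_one.2 ⟨n, hn, hζ⟩).orderOf_pos.ne'⟩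
    have := (IsPrimitiveRoot.orderOf ζ).isCyclotomicExtension_of_adjoin_eq_top htop
    have := IsCyclotomicExtension.isGalois {m} ℚ E
    have hrank : finrank ℚ E = m.totient := IsCyclotomicExtension.Rat.finrank m E
    have hm : 2 < m := hdeg.trans_le (hrank ▸ m.totient_le)
    have htwo : 2 ∣ finrank ℚ E := hrank ▸ (Nat.totient_even hm).two_dvd
    have hquad := IsGalois.finrank_eq_of_prime_dvd_of_forall_eq_bot_or_eq_top hsub Nat.prime_two htwo
    omega
end

section
/- Let E be a purely imaginary number field of degree 2s over ℚ (s ≥ 1), i.e., E admits no ring homomorphism into ℝ, and suppose the only roots of unity in E are 1 and −1. Let O be an order of E, i.e., a subring of E that is finitely generated as a ℤ-module and spans E as a ℚ-vector space. Then the group of units O^× of O is isomorphic, as an abstract group, to (ℤ/2ℤ) × ℤ^{s−1}. -/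
/-!
Every element of an order `O` is integral over `ℤ`, so `O ⊆ 𝓞 E`; since `O` spans `E` over `ℚ`
and `𝓞 E` is finitely generated, some nonzero integer `n` satisfies `n • 𝓞 E ⊆ O`. A unit of
`𝓞 E` congruent to `1` modulo `n` lies, together with its inverse, in `1 + n • 𝓞 E ⊆ O`, so `Oˣ`
has finite index in `(𝓞 E)ˣ` and therefore the same rank, which by Dirichlet's unit theorem is
`r₁ + r₂ - 1 = s - 1` because `E` has no real places. The torsion of `Oˣ` is the group `{±1}` of
roots of unity, and a finitely generated abelian group is its torsion times a free group of its
rank.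
-/

open Module NumberField

section Lattice

variable {V : Type*} [AddCommGroup V] [Module ℚ V]

theorem exists_int_smul_mem_span_int_of_span_rat_eq_top {s : Set V}
    (hs : Submodule.span ℚ s = ⊤) (x : V) :
    ∃ n : ℤ, n ≠ 0 ∧ n • x ∈ Submodule.span ℤ s := by
  obtain ⟨y, hy, z, rfl⟩ := (IsLocalization.mem_span_iff (nonZeroDivisors ℤ) (S := ℚ)).mp
    (hs ▸ Submodule.mem_top : x ∈ Submodule.span ℚ s)
  have hz : (z : ℤ) ≠ 0 := nonZeroDivisors.coe_ne_zero z
  refine ⟨z, hz, ?_⟩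
  rwa [← Int.cast_smul_eq_zsmul ℚ, smul_smul, IsFractionRing.mk'_eq_div, map_one,
    algebraMap_int_eq, eq_intCast, mul_one_div_cancel (by exact_mod_cast hz), one_smul]

theorem exists_int_smul_mem_span_int_of_fg {s : Set V} (hs : Submodule.span ℚ s = ⊤)
    {N : Submodule ℤ V} (hN : N.FG) :
    ∃ n : ℤ, n ≠ 0 ∧ ∀ x ∈ N, n • x ∈ Submodule.span ℤ s := by
  classical
  obtain ⟨t, rfl⟩ := hN
  choose d hd0 hd using exists_int_smul_mem_span_int_of_span_rat_eq_top hs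
  refine ⟨∏ x ∈ t, d x, Finset.prod_ne_zero_iff.mpr fun x _ ↦ hd0 x, fun x hx ↦ ?_⟩
  suffices Submodule.span ℤ (t : Set V) ≤
      (Submodule.span ℤ s).comap (DistribSMul.toLinearMap ℤ V (∏ x ∈ t, d x)) from this hx
  refine Submodule.span_le.mpr fun y hy ↦ ?_
  change (∏ x ∈ t, d x) • y ∈ Submodule.span ℤ s
  rw [← Finset.mul_prod_erase t d hy, mul_comm, mul_smul]
  exact Submodule.smul_mem _ _ (hd y)

end Lattice

theorem AddSubgroup.finrank_eq_of_finiteIndex_of_finite {M : Type*} [AddCommGroup M]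
    [Module.Finite ℤ M] (A : AddSubgroup M) [A.FiniteIndex] :
    finrank ℤ A = finrank ℤ M := by
  refine le_antisymm A.toIntSubmodule.finrank_le ?_
  let mulIndex : M →ₗ[ℤ] A.toIntSubmodule :=
    (DistribSMul.toLinearMap ℤ M A.index).codRestrict A.toIntSubmodule A.nsmul_index_mem
  have ker_le : LinearMap.ker mulIndex ≤ Submodule.torsion ℤ M := by
    intro x hx
    have hx : A.index • x = 0 := congrArg Subtype.val hx
    exact ⟨⟨A.index, mem_nonZeroDivisors_of_ne_zero (by exact_mod_cast FiniteIndex.index_ne_zero)⟩,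
      (natCast_zsmul x A.index).trans hx⟩
  calc finrank ℤ M = finrank ℤ (M ⧸ LinearMap.ker mulIndex) :=
        (finrank_quotient_eq_of_le_torsion ker_le).symm
    _ = finrank ℤ (LinearMap.range mulIndex) := mulIndex.quotKerEquivRange.finrank_eq
    _ ≤ finrank ℤ A := Submodule.finrank_le _

theorem MonoidHom.finrank_additive_eq_of_injective {G H : Type*} [CommGroup G] [CommGroup H]
    [Module.Finite ℤ (Additive H)] (φ : G →* H) (hφ : Function.Injective φ)
    [φ.range.FiniteIndex] : finrank ℤ (Additive G) = finrank ℤ (Additive H) := by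
  let ℓ := (MonoidHom.toAdditive φ).toIntLinearMap
  have : (LinearMap.range ℓ).toAddSubgroup.FiniteIndex :=
    Subgroup.finiteIndex_toAddSubgroup_iff.mpr ‹_›
  rw [(LinearEquiv.ofInjective ℓ hφ).finrank_eq]
  exact AddSubgroup.finrank_eq_of_finiteIndex_of_finite (LinearMap.range ℓ).toAddSubgroup

theorem AddCommGroup.nonempty_addEquiv_torsion_prod {M : Type*} [AddCommGroup M]
    [Module.Finite ℤ M] :
    Nonempty (M ≃+ AddCommGroup.torsion M × (Fin (finrank ℤ M) → ℤ)) := by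
  let N := Submodule.torsion ℤ M
  obtain ⟨_, hsection⟩ :=
    Module.projective_lifting_property N.mkQ LinearMap.id N.mkQ_surjective
  have hrank : finrank ℤ (M ⧸ N) = finrank ℤ M := finrank_quotient_eq_of_le_torsion le_rfl
  let basis := (Module.finBasis ℤ (M ⧸ N)).reindex (finCongr hrank)
  let split : (N × (M ⧸ N)) ≃ₗ[ℤ] M := lequivProdOfRightSplitExact N.injective_subtype
    (by rw [Submodule.range_subtype, Submodule.ker_mkQ]) hsection
  exact ⟨split.symm.toAddEquiv.trans
    ((AddEquiv.addSubgroupCongr Submodule.torsion_int).prodCongr basis.equivFun.toAddEquiv)⟩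

theorem RingHom.finiteIndex_range_unitsMap {A R : Type*} [CommRing A] [CommRing R]
    (f : A →+* R) (hf : Function.Injective f) (I : Ideal R) [_root_.Finite (R ⧸ I)]
    (hI : (I : Set R) ⊆ Set.range f) : (Units.map (f : A →* R)).range.FiniteIndex := by
  let reduce : Rˣ →* (R ⧸ I)ˣ := Units.map (Ideal.Quotient.mk I : R →* R ⧸ I)
  have mem_range : ∀ u ∈ reduce.ker, (u : R) ∈ Set.range f := by
    intro u hu
    have : (u : R) - 1 ∈ I := Ideal.Quotient.eq.mp (congrArg Units.val hu)
    obtain ⟨a, ha⟩ := hI this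
    exact ⟨a + 1, by simp [ha]⟩
  have ker_le : reduce.ker ≤ (Units.map (f : A →* R)).range := by
    intro u hu
    obtain ⟨a, ha⟩ := mem_range u hu
    obtain ⟨b, hb⟩ := mem_range u⁻¹ (inv_mem hu)
    have hab : a * b = 1 := hf (by simp [ha, hb])
    exact ⟨⟨a, b, hab, by rw [mul_comm, hab]⟩, Units.ext ha⟩
  have := Subgroup.finiteIndex_ker reduce
  exact Subgroup.finiteIndex_of_le ker_le

theorem Units.card_torsion_eq_two {R : Type*} [CommRing R] (hR : (-1 : R) ≠ 1)
    (h : ∀ u : Rˣ, IsOfFinOrder u → u = 1 ∨ u = -1) :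
    Nat.card (CommGroup.torsion Rˣ) = 2 := by
  have : (CommGroup.torsion Rˣ : Set Rˣ) = {1, -1} := by
    ext u
    refine ⟨h u, ?_⟩
    rintro (rfl | rfl)
    · exact IsOfFinOrder.one
    · exact isOfFinOrder_iff_pow_eq_one.mpr ⟨2, two_pos, by simp⟩
  rw [← SetLike.coe_sort_coe, Nat.card_coe_set_eq, this, Set.ncard_pair]
  exact fun h1 ↦ hR (by simpa using congrArg Units.val h1.symm)

theorem NumberField.Units.rank_eq_of_isEmpty_ringHom_real {K : Type*} [Field K] [NumberField K]
    (hK : IsEmpty (K →+* ℝ)) {s : ℕ} (hdeg : finrank ℚ K = 2 * s) : Units.rank K = s - 1 := by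
  have : IsTotallyComplex K := ⟨fun _ ↦ InfinitePlace.not_isReal_iff_isComplex.mp
    fun hw ↦ hK.elim (InfinitePlace.embedding_of_isReal hw)⟩
  have := IsTotallyComplex.finrank K
  rw [Units.rank, InfinitePlace.card_eq_nrRealPlaces_add_nrComplexPlaces,
    IsTotallyComplex.nrRealPlaces_eq_zero]
  omega

namespace Subring

variable {E : Type*}

theorem isIntegral_of_mem [CommRing E] (O : Subring E) [Module.Finite ℤ O] {x : E}
    (hx : x ∈ O) : IsIntegral ℤ x :=
  (Algebra.IsIntegral.isIntegral (R := ℤ) (⟨x, hx⟩ : O)).map O.subtype.toIntAlgHom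

theorem eq_one_or_neg_one_of_isOfFinOrder [CommRing E] (O : Subring E)
    (hroots : ∀ ζ : E, (∃ n : ℕ, 0 < n ∧ ζ ^ n = 1) → ζ = 1 ∨ ζ = -1) {u : Oˣ}
    (hu : IsOfFinOrder u) : u = 1 ∨ u = -1 := by
  obtain ⟨n, hn, hpow⟩ := isOfFinOrder_iff_pow_eq_one.mp hu
  have hE : ((u : O) : E) ^ n = 1 := by simpa using congrArg (fun v : Oˣ ↦ ((v : O) : E)) hpow
  rcases hroots _ ⟨n, hn, hE⟩ with h | h
  · exact .inl (Units.ext (Subtype.ext (by simpa using h)))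
  · exact .inr (Units.ext (Subtype.ext (by simpa using h)))

variable [Field E] (O : Subring E)

def toRingOfIntegers [Module.Finite ℤ O] : O →+* 𝓞 E where
  toFun x := ⟨x, O.isIntegral_of_mem x.2⟩
  map_one' := rfl
  map_mul' _ _ := rfl
  map_zero' := rfl
  map_add' _ _ := rfl

theorem toRingOfIntegers_injective [Module.Finite ℤ O] : Function.Injective O.toRingOfIntegers :=
  fun _ _ h ↦ Subtype.ext (congrArg RingOfIntegers.val h)

theorem exists_int_smul_mem_of_span_eq_top [NumberField E]
    (hspan : Submodule.span ℚ (O : Set E) = ⊤) :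
    ∃ n : ℤ, n ≠ 0 ∧ ∀ y : 𝓞 E, n • (y : E) ∈ O := by
  let ι : 𝓞 E →ₗ[ℤ] E := (algebraMap (𝓞 E) E).toIntAlgHom.toLinearMap
  obtain ⟨n, hn, hmem⟩ := exists_int_smul_mem_span_int_of_fg hspan
    (Module.Finite.iff_fg.mp (inferInstance : Module.Finite ℤ (LinearMap.range ι)))
  have span_le : Submodule.span ℤ (O : Set E) ≤ O.toAddSubgroup.toIntSubmodule :=
    Submodule.span_le.mpr fun _ h ↦ h
  exact ⟨n, hn, fun y ↦ span_le (hmem _ ⟨y, rfl⟩)⟩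

theorem finiteIndex_range_unitsMap_toRingOfIntegers [NumberField E] [Module.Finite ℤ O]
    (hspan : Submodule.span ℚ (O : Set E) = ⊤) :
    (Units.map (O.toRingOfIntegers : O →* 𝓞 E)).range.FiniteIndex := by
  obtain ⟨n, hn, hmem⟩ := O.exists_int_smul_mem_of_span_eq_top hspan
  let I : Ideal (𝓞 E) := Ideal.span {(n : 𝓞 E)}
  have : Finite (𝓞 E ⧸ I) :=
    Ideal.finiteQuotientOfFreeOfNeBot I (by simpa [I, Ideal.span_singleton_eq_bot] using hn)
  refine O.toRingOfIntegers.finiteIndex_range_unitsMap O.toRingOfIntegers_injective I ?_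
  intro x hx
  obtain ⟨c, rfl⟩ := Ideal.mem_span_singleton'.mp hx
  exact ⟨⟨_, hmem c⟩, RingOfIntegers.ext (show n • (c : E) = _ by simp [zsmul_eq_mul, mul_comm])⟩

end Subring

theorem units_of_order_in_purely_imaginary_field_general
    (E : Type) [Field E] [NumberField E] (s : ℕ)
    (hdeg : Module.finrank ℚ E = 2 * s)
    (him : IsEmpty (E →+* ℝ))
    (hroots : ∀ ζ : E, (∃ n : ℕ, 0 < n ∧ ζ ^ n = 1) → ζ = 1 ∨ ζ = -1)
    (O : Subring E) [Module.Finite ℤ O]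
    (hspan : Submodule.span ℚ (O : Set E) = ⊤) :
    Nonempty (Oˣ ≃* Multiplicative (ZMod 2 × (Fin (s - 1) → ℤ))) := by
  have hcard : Nat.card (CommGroup.torsion Oˣ) = 2 :=
    Units.card_torsion_eq_two (by norm_num) fun _ ↦ O.eq_one_or_neg_one_of_isOfFinOrder hroots
  let eTorsion : AddCommGroup.torsion (Additive Oˣ) ≃+ ZMod 2 :=
    addEquivOfPrimeCardEq (p := 2) hcard (Nat.card_zmod 2)
  let φ : Oˣ →* (𝓞 E)ˣ := Units.map O.toRingOfIntegers
  have hφ : Function.Injective φ := Units.map_injective O.toRingOfIntegers_injective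
  have : φ.range.FiniteIndex := O.finiteIndex_range_unitsMap_toRingOfIntegers hspan
  have : Module.Finite ℤ (Additive Oˣ) := .of_injective (MonoidHom.toAdditive φ).toIntLinearMap hφ
  have hrank : finrank ℤ (Additive Oˣ) = s - 1 := by
    rw [φ.finrank_additive_eq_of_injective hφ, Units.finrank_eq,
      Units.rank_eq_of_isEmpty_ringHom_real him hdeg]
  obtain ⟨e⟩ := AddCommGroup.nonempty_addEquiv_torsion_prod (M := Additive Oˣ)
  rw [hrank] at e
  exact ⟨(MulEquiv.multiplicativeAdditive Oˣ).symm.trans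
    (AddEquiv.toMultiplicative (e.trans (eTorsion.prodCongr (AddEquiv.refl _))))⟩

/-- Let `E` be a purely imaginary number field of degree `2s`
(`s ≥ 1`) whose only roots of unity are `1` and `-1`, and let `O` be an order
of `E`. Then the unit group `Oˣ` is isomorphic to `(ℤ/2ℤ) × ℤ^(s-1)`. -/
theorem units_of_order_in_purely_imaginary_field
    (E : Type) [Field E] [NumberField E] (s : ℕ) (hs : 1 ≤ s)
    (hdeg : Module.finrank ℚ E = 2 * s)
    (him : IsEmpty (E →+* ℝ))
    (hroots : ∀ ζ : E, (∃ n : ℕ, 0 < n ∧ ζ ^ n = 1) → ζ = 1 ∨ ζ = -1)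
    (O : Subring E) [Module.Finite ℤ O]
    (hspan : Submodule.span ℚ (O : Set E) = ⊤) :
    Nonempty (Oˣ ≃* Multiplicative (ZMod 2 × (Fin (s - 1) → ℤ))) :=
  units_of_order_in_purely_imaginary_field_general E s hdeg him hroots O hspan
end
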